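/- arXiv:2108.10635 — 7 statements merged into one kernel-verified Lean document; each statement's English description precedes it below -/
import Mathlib

section
/- Let n ≥ 2, let H be a closed subspace of a complex Hilbert space K, and let V_1,…,V_n be commuting bounded operators on K such that V_n is an isometry, V_j = V_{n−j}^* V_n for j = 1,…,n−1, and H is invariant under each adjoint V_j^*. Define S_j := P_H V_j|_H (so that S_j^* = V_j^*|_H), and note ‖S_n‖ ≤ 1; let D := (I_H − S_n^* S_n)^{1/2} be the positive square root of the positive operator I_H − S_n^* S_n, and let Q be the orthogonal projection of H onto (ker D)^⊥. Suppose E_1,…,E_{n−1} are bounded operators on H satisfying E_j = Q E_j Q and S_j − S_{n−j}^* S_n = D E_j D for j = 1,…,n−1. Then for every i = 1,…,n−1 and every x ∈ ker D one has E_i^* D S_i x = E_{n−i}^* D S_{n−i} x; that is, the operator E_i^* D S_i − E_{n−i}^* D S_{n−i} vanishes on ker D. -/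
/-!
On `ker D` the compression `Sₙ` is isometric, so `Vₙ x` already lies in `H`, and then so does
every `Vⱼ x = V_{n−j}* Vₙ x`; hence `Sⱼ x = Vⱼ x` there. Taking adjoints in
`Sⱼ − S_{n−j}* Sₙ = D Eⱼ D` gives `D Eⱼ* D = Sⱼ* − Sₙ* S_{n−j}`. Since `Sⱼ x = Vⱼ x`, the
relations `Vⱼ = V_{n−j}* Vₙ` and commutativity give `Sᵢ* Sᵢ x = S_{n−i}* S_{n−i} x` and
`S_{n−i} Sᵢ x = Sᵢ S_{n−i} x`, so `Eᵢ* D Sᵢ x − E_{n−i}* D S_{n−i} x` lies in `ker D`; it also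
lies in `ran Q = (ker D)ᗮ` because `Eⱼ* = Q Eⱼ* Q`, hence it vanishes.
-/

open ContinuousLinearMap

section

variable {𝕜 E : Type*} [RCLike 𝕜] [NormedAddCommGroup E] [InnerProductSpace 𝕜 E]

namespace ContinuousLinearMap

variable [CompleteSpace E]

theorem norm_apply_eq_of_adjoint_apply_apply_eq {S : E →L[𝕜] E} {x : E}
    (hx : adjoint S (S x) = x) : ‖S x‖ = ‖x‖ := by
  have h := S.apply_norm_sq_eq_inner_adjoint_left x
  rw [comp_apply, hx, inner_self_eq_norm_sq] at h
  exact (pow_left_inj₀ (norm_nonneg _) (norm_nonneg _) two_ne_zero).mp h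

theorem adjoint_apply_apply_eq_self_of_mul_self_eq_one_sub {S D : E →L[𝕜] E}
    (hD : D * D = 1 - adjoint S * S) {x : E} (hx : D x = 0) : adjoint S (S x) = x := by
  have h := congr($hD x)
  simp only [mul_apply_eq_comp, hx, map_zero, sub_apply] at h
  exact (sub_eq_zero.mp h.symm).symm

theorem adjoint_mul_self_eq_of_eq_adjoint_mul {A B C : E →L[𝕜] E} (hA : A = adjoint B * C)
    (hB : B = adjoint A * C) (hAB : Commute A B) : adjoint A * A = adjoint B * B := by
  have hA' : adjoint A = adjoint C * B := by
    rw [hA]; simp only [← star_eq_adjoint, star_mul, star_star]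
  have hB' : adjoint B = adjoint C * A := by
    rw [hB]; simp only [← star_eq_adjoint, star_mul, star_star]
  rw [hA', hB', mul_assoc, mul_assoc, hAB.eq]

theorem apply_adjoint_apply_apply_of_sub_eq {A T R D F : E →L[𝕜] E} (hD : IsSelfAdjoint D)
    (h : A - adjoint T * R = D * F * D) (y : E) :
    D (adjoint F (D y)) = adjoint A y - adjoint R (T y) := by
  have h' : adjoint A - adjoint R * T = D * adjoint F * D := by
    simpa only [← star_eq_adjoint, star_sub, star_mul, star_star, hD.star_eq, mul_assoc]
      using congrArg star h
  simpa only [sub_apply, mul_apply_eq_comp] using congr($h' y).symm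

theorem adjoint_apply_mem_range_of_eq_mul_mul {Q F : E →L[𝕜] E} (hQ : IsSelfAdjoint Q)
    (hF : F = Q * F * Q) (y : E) : adjoint F y ∈ LinearMap.range (Q : E →ₗ[𝕜] E) := by
  have hF' : adjoint F = Q * adjoint F * Q := by
    simpa only [← star_eq_adjoint, star_mul, hQ.star_eq, mul_assoc] using congrArg star hF
  exact ⟨adjoint F (Q y), by simpa only [coe_coe, mul_apply_eq_comp] using congr($hF' y).symm⟩

end ContinuousLinearMap

namespace Submodule

variable (U : Submodule 𝕜 E) [CompleteSpace U] (T : E →L[𝕜] E)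

noncomputable def compression : U →L[𝕜] U := U.orthogonalProjectionOnto.comp (T.comp U.subtypeL)

theorem compression_apply (x : U) : U.compression T x = U.orthogonalProjectionOnto (T x) := rfl

theorem coe_compression_apply_of_mem {x : U} (hx : T x ∈ U) : (U.compression T x : E) = T x :=
  U.starProjection_eq_self_iff.mpr hx

theorem coe_adjoint_compression_apply [CompleteSpace E] (hT : ∀ u : U, adjoint T u ∈ U) (u : U) :
    (adjoint (U.compression T) u : E) = adjoint T u := by
  rw [compression, adjoint_comp, adjoint_comp, U.adjoint_subtypeL,
    U.adjoint_orthogonalProjectionOnto]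
  exact U.starProjection_eq_self_iff.mpr (hT u)

theorem compression_apply_compression_apply_of_mem (A : E →L[𝕜] E) {x : U} (hx : T x ∈ U) :
    U.compression A (U.compression T x) = U.orthogonalProjectionOnto (A (T x)) := by
  rw [U.compression_apply A, U.coe_compression_apply_of_mem T hx]

variable {T}

theorem apply_mem_of_adjoint_compression_apply_apply_eq [CompleteSpace E]
    (hT : ∀ x, ‖T x‖ = ‖x‖) {x : U} (hx : adjoint (U.compression T) (U.compression T x) = x) :
    T x ∈ U := by
  rw [U.mem_iff_norm_starProjection, hT]
  exact norm_apply_eq_of_adjoint_apply_apply_eq hx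

theorem compression_apply_compression_apply_comm {A : E →L[𝕜] E} (hAT : Commute A T) {x : U}
    (hAx : A x ∈ U) (hTx : T x ∈ U) :
    U.compression A (U.compression T x) = U.compression T (U.compression A x) := by
  rw [U.compression_apply_compression_apply_of_mem T A hTx,
    U.compression_apply_compression_apply_of_mem A T hAx, ← mul_apply_eq_comp, hAT.eq,
    mul_apply_eq_comp]

theorem adjoint_compression_apply_compression_apply_eq [CompleteSpace E] {A B C : E →L[𝕜] E}
    (hA : A = adjoint B * C) (hB : B = adjoint A * C) (hAB : Commute A B)
    (hA_inv : ∀ u : U, adjoint A u ∈ U) (hB_inv : ∀ u : U, adjoint B u ∈ U) {x : U}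
    (hAx : A x ∈ U) (hBx : B x ∈ U) :
    adjoint (U.compression A) (U.compression A x) =
      adjoint (U.compression B) (U.compression B x) := by
  refine Subtype.ext ?_
  rw [U.coe_adjoint_compression_apply A hA_inv, U.coe_adjoint_compression_apply B hB_inv,
    U.coe_compression_apply_of_mem A hAx, U.coe_compression_apply_of_mem B hBx,
    ← mul_apply_eq_comp, ← mul_apply_eq_comp, adjoint_mul_self_eq_of_eq_adjoint_mul hA hB hAB]

end Submodule

end

theorem stmt_3_general {K : Type*} [NormedAddCommGroup K] [InnerProductSpace ℂ K] [CompleteSpace K]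
    (Hs : Submodule ℂ K) [CompleteSpace Hs]
    (n : ℕ)
    (V : ℕ → (K →L[ℂ] K))
    (hVcomm : ∀ i j, 1 ≤ i → i ≤ n → 1 ≤ j → j ≤ n → V i * V j = V j * V i)
    (hViso : ∀ x : K, ‖V n x‖ = ‖x‖)
    (hVrel : ∀ j, 1 ≤ j → j ≤ n - 1 → V j = adjoint (V (n - j)) * V n)
    (hinv : ∀ j, 1 ≤ j → j ≤ n → ∀ h : Hs, adjoint (V j) (h : K) ∈ Hs)
    (S : ℕ → (Hs →L[ℂ] Hs))
    (hS : ∀ j, 1 ≤ j → j ≤ n →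
      S j = Hs.orthogonalProjectionOnto.comp ((V j).comp Hs.subtypeL))
    (D : Hs →L[ℂ] Hs)
    (hDpos : D.IsPositive)
    (hDsq : D * D = 1 - adjoint (S n) * S n)
    (Q : Hs →L[ℂ] Hs)
    -- `Q` is the orthogonal projection of `H` onto `(ker D)ᗮ`: the self-adjoint idempotent
    -- with range `(ker D)ᗮ`
    (hQsa : IsSelfAdjoint Q)
    (hQran : LinearMap.range (Q : Hs →ₗ[ℂ] Hs) = (LinearMap.ker (D : Hs →ₗ[ℂ] Hs))ᗮ)
    (E : ℕ → (Hs →L[ℂ] Hs))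
    (hEQ : ∀ j, 1 ≤ j → j ≤ n - 1 → E j = Q * E j * Q)
    (hE : ∀ j, 1 ≤ j → j ≤ n - 1 → S j - adjoint (S (n - j)) * S n = D * E j * D) :
    ∀ i, 1 ≤ i → i ≤ n - 1 → ∀ x : Hs, D x = 0 →
      adjoint (E i) (D (S i x)) = adjoint (E (n - i)) (D (S (n - i) x)) := by
  intro i hi hin x hx
  have hSV : ∀ j, 1 ≤ j → j ≤ n → S j = Hs.compression (V j) := hS
  have hni : 1 ≤ n - i ∧ n - i ≤ n - 1 := by omega
  have hVnx : V n x ∈ Hs := by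
    have h := adjoint_apply_apply_eq_self_of_mul_self_eq_one_sub hDsq hx
    rw [hSV n (by omega) le_rfl] at h
    exact Hs.apply_mem_of_adjoint_compression_apply_apply_eq hViso h
  have hVx : ∀ j, 1 ≤ j → j ≤ n - 1 → V j x ∈ Hs := fun j hj hjn =>
    hVrel j hj hjn ▸ hinv (n - j) (by omega) (by omega) ⟨_, hVnx⟩
  have hVrel' : V (n - i) = adjoint (V i) * V n := by
    rw [hVrel (n - i) hni.1 hni.2, Nat.sub_sub_self (by omega : i ≤ n)]
  have hcomm : Commute (V i) (V (n - i)) := hVcomm i (n - i) hi (by omega) hni.1 (by omega)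
  have hSS : adjoint (S i) (S i x) = adjoint (S (n - i)) (S (n - i) x) := by
    rw [hSV i hi (by omega), hSV (n - i) hni.1 (by omega)]
    exact Hs.adjoint_compression_apply_compression_apply_eq (hVrel i hi hin) hVrel' hcomm
      (hinv i hi (by omega)) (hinv (n - i) hni.1 (by omega)) (hVx i hi hin) (hVx _ hni.1 hni.2)
  have hSS' : S (n - i) (S i x) = S i (S (n - i) x) := by
    rw [hSV i hi (by omega), hSV (n - i) hni.1 (by omega)]
    exact Hs.compression_apply_compression_apply_comm hcomm.symm (hVx _ hni.1 hni.2) (hVx i hi hin)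
  have hker : adjoint (E i) (D (S i x)) - adjoint (E (n - i)) (D (S (n - i) x)) ∈
      LinearMap.ker (D : Hs →ₗ[ℂ] Hs) := by
    have hEni := hE (n - i) hni.1 hni.2
    rw [Nat.sub_sub_self (by omega : i ≤ n)] at hEni
    rw [LinearMap.mem_ker, coe_coe, map_sub,
      apply_adjoint_apply_apply_of_sub_eq hDpos.isSelfAdjoint (hE i hi hin),
      apply_adjoint_apply_apply_of_sub_eq hDpos.isSelfAdjoint hEni, hSS, hSS', sub_self]
  have horth : adjoint (E i) (D (S i x)) - adjoint (E (n - i)) (D (S (n - i) x)) ∈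
      (LinearMap.ker (D : Hs →ₗ[ℂ] Hs))ᗮ :=
    hQran ▸ sub_mem (adjoint_apply_mem_range_of_eq_mul_mul hQsa (hEQ i hi hin) _)
      (adjoint_apply_mem_range_of_eq_mul_mul hQsa (hEQ (n - i) hni.1 hni.2) _)
  exact sub_eq_zero.mp (Submodule.disjoint_def.mp (Submodule.orthogonal_disjoint _) _ hker horth)

/-- Let `n ≥ 2` and let `(V₁,…,Vₙ)` be a commuting tuple on `K` with `Vₙ` an isometry,
`Vⱼ = V_{n−j}* Vₙ` and `H` invariant under each `Vⱼ*`.  With `Sⱼ = P_H Vⱼ|_H`, `D` the positive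
square root of `I − Sₙ* Sₙ`, `Q` the orthogonal projection of `H` onto `(ker D)ᗮ`, and
`E₁,…,E_{n−1}` operators with `Eⱼ = Q Eⱼ Q` and `Sⱼ − S_{n−j}* Sₙ = D Eⱼ D`, the operator
`Eᵢ* D Sᵢ − E_{n−i}* D S_{n−i}` vanishes on `ker D` for `i = 1,…,n−1`. -/
theorem stmt_3 {K : Type*} [NormedAddCommGroup K] [InnerProductSpace ℂ K] [CompleteSpace K]
    (Hs : Submodule ℂ K) [CompleteSpace Hs]
    (n : ℕ) (hn : 2 ≤ n)
    (V : ℕ → (K →L[ℂ] K))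
    (hVcomm : ∀ i j, 1 ≤ i → i ≤ n → 1 ≤ j → j ≤ n → V i * V j = V j * V i)
    (hViso : ∀ x : K, ‖V n x‖ = ‖x‖)
    (hVrel : ∀ j, 1 ≤ j → j ≤ n - 1 → V j = adjoint (V (n - j)) * V n)
    (hinv : ∀ j, 1 ≤ j → j ≤ n → ∀ h : Hs, adjoint (V j) (h : K) ∈ Hs)
    (S : ℕ → (Hs →L[ℂ] Hs))
    (hS : ∀ j, 1 ≤ j → j ≤ n →
      S j = Hs.orthogonalProjectionOnto.comp ((V j).comp Hs.subtypeL))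
    (D : Hs →L[ℂ] Hs)
    (hDpos : D.IsPositive)
    (hDsq : D * D = 1 - adjoint (S n) * S n)
    (Q : Hs →L[ℂ] Hs)
    -- `Q` is the orthogonal projection of `H` onto `(ker D)ᗮ`: the self-adjoint idempotent
    -- with range `(ker D)ᗮ`
    (hQidem : Q * Q = Q) (hQsa : IsSelfAdjoint Q)
    (hQran : LinearMap.range (Q : Hs →ₗ[ℂ] Hs) = (LinearMap.ker (D : Hs →ₗ[ℂ] Hs))ᗮ)
    (E : ℕ → (Hs →L[ℂ] Hs))
    (hEQ : ∀ j, 1 ≤ j → j ≤ n - 1 → E j = Q * E j * Q)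
    (hE : ∀ j, 1 ≤ j → j ≤ n - 1 → S j - adjoint (S (n - j)) * S n = D * E j * D) :
    ∀ i, 1 ≤ i → i ≤ n - 1 → ∀ x : Hs, D x = 0 →
      adjoint (E i) (D (S i x)) = adjoint (E (n - i)) (D (S (n - i) x)) :=
  stmt_3_general Hs n V hVcomm hViso hVrel hinv S hS D hDpos hDsq Q hQsa hQran E hEQ hE
end

section
/- Let H be a closed subspace of a complex Hilbert space K. Let T_1, T_2, V_3 be pairwise commuting bounded operators on H with ‖T_1‖ ≤ 1, ‖T_2‖ ≤ 1 and V_3 an isometry of H. Let V_1, V_2 be commuting isometries on K such that P_H V_1^{m_1} V_2^{m_2}|_H = T_1^{m_1} T_2^{m_2} for all m_1, m_2 ∈ ℕ∪{0}. Define W : K → K by W x = V_3 (P_H x) + (x − P_H x) (so W acts as V_3 on H and as the identity on H^⊥). Then W is an isometry on K and P_H V_1^{m_1} V_2^{m_2} W^{m_3}|_H = T_1^{m_1} T_2^{m_2} V_3^{m_3} for all m_1, m_2, m_3 ∈ ℕ∪{0}; that is, (V_1, V_2, W) is an isometric dilation of (T_1, T_2, V_3). -/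
/-!
`W` maps `H` into `H` and `Hᗮ` identically onto itself, so it is isometric by Pythagoras.
Since `W` agrees with `V₃` on the invariant subspace `H`, `W ^ m₃` agrees with `V₃ ^ m₃` there,
and the dilation identity reduces to the one for `(V₁, V₂)`.
-/

namespace Submodule

variable {𝕜 E : Type*} [RCLike 𝕜] [NormedAddCommGroup E] [InnerProductSpace 𝕜 E]
  {U : Submodule 𝕜 E}

theorem norm_add_sq_of_mem_orthogonal {u v : E} (hu : u ∈ U) (hv : v ∈ Uᗮ) :
    ‖u + v‖ ^ 2 = ‖u‖ ^ 2 + ‖v‖ ^ 2 := by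
  simpa only [sq] using
    norm_add_sq_eq_norm_sq_add_norm_sq_of_inner_eq_zero u v (inner_right_of_mem_orthogonal hu hv)

theorem norm_map_orthogonalProjectionOnto_add_sub [U.HasOrthogonalProjection] {V : U → U}
    (hV : ∀ u, ‖V u‖ = ‖u‖) (x : E) :
    ‖(V (U.orthogonalProjectionOnto x) : E) + (x - U.orthogonalProjectionOnto x)‖ = ‖x‖ := by
  have hperp : x - (U.orthogonalProjectionOnto x : E) ∈ Uᗮ :=
    U.sub_starProjection_mem_orthogonal x
  have hsplit : ‖x‖ ^ 2 = ‖(U.orthogonalProjectionOnto x : E)‖ ^ 2 +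
      ‖x - U.orthogonalProjectionOnto x‖ ^ 2 := by
    rw [← norm_add_sq_of_mem_orthogonal (coe_mem _) hperp, add_sub_cancel]
  rw [← sq_eq_sq₀ (norm_nonneg _) (norm_nonneg _), hsplit,
    norm_add_sq_of_mem_orthogonal (coe_mem _) hperp, norm_coe, norm_coe, hV]

theorem pow_apply_coe_of_apply_coe {W : E →L[𝕜] E} {V : U →L[𝕜] U}
    (hWV : ∀ u : U, W u = V u) (n : ℕ) (u : U) : (W ^ n) (u : E) = ((V ^ n) u : E) := by
  induction n generalizing u with
  | zero => rfl
  | succ n ih => rw [pow_succ, pow_succ, mul_apply_eq_comp, mul_apply_eq_comp, hWV, ih]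

end Submodule

theorem stmt_5_general {K : Type*} [NormedAddCommGroup K] [InnerProductSpace ℂ K]
    (Hs : Submodule ℂ K) [CompleteSpace Hs]
    (T₁ T₂ V₃ : Hs →L[ℂ] Hs)
    (hV₃ : ∀ x : Hs, ‖V₃ x‖ = ‖x‖)
    (V₁ V₂ : K →L[ℂ] K)
    (hdil : ∀ (m₁ m₂ : ℕ) (h : Hs),
      Hs.orthogonalProjectionOnto ((V₁ ^ m₁) ((V₂ ^ m₂) (h : K))) = (T₁ ^ m₁) ((T₂ ^ m₂) h))
    (W : K →L[ℂ] K)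
    (hW : ∀ x : K, W x = (V₃ (Hs.orthogonalProjectionOnto x) : K) +
      (x - (Hs.orthogonalProjectionOnto x : K))) :
    (∀ x : K, ‖W x‖ = ‖x‖) ∧
    ∀ (m₁ m₂ m₃ : ℕ) (h : Hs),
      Hs.orthogonalProjectionOnto ((V₁ ^ m₁) ((V₂ ^ m₂) ((W ^ m₃) (h : K)))) =
        (T₁ ^ m₁) ((T₂ ^ m₂) ((V₃ ^ m₃) h)) := by
  have hWV : ∀ u : Hs, W u = V₃ u := fun u => by
    rw [hW, Submodule.orthogonalProjectionOnto_mem_subspace_eq_self, sub_self, add_zero]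
  refine ⟨fun x => hW x ▸ Submodule.norm_map_orthogonalProjectionOnto_add_sub hV₃ x, ?_⟩
  intro m₁ m₂ m₃ h
  rw [Submodule.pow_apply_coe_of_apply_coe hWV]
  exact hdil m₁ m₂ _

/-- Let `T₁, T₂, V₃` be pairwise commuting operators on a closed subspace `H ⊆ K` with `T₁, T₂`
contractions and `V₃` an isometry, and let `(V₁, V₂)` be a commuting isometric dilation of
`(T₁, T₂)` on `K`. Define `W x = V₃(P_H x) + (x − P_H x)`. Then `W` is an isometry and
`(V₁, V₂, W)` is an isometric dilation of `(T₁, T₂, V₃)`. -/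
theorem stmt_5 {K : Type*} [NormedAddCommGroup K] [InnerProductSpace ℂ K] [CompleteSpace K]
    (Hs : Submodule ℂ K) [CompleteSpace Hs]
    (T₁ T₂ V₃ : Hs →L[ℂ] Hs)
    (h12 : T₁ * T₂ = T₂ * T₁) (h13 : T₁ * V₃ = V₃ * T₁) (h23 : T₂ * V₃ = V₃ * T₂)
    (hT₁ : ‖T₁‖ ≤ 1) (hT₂ : ‖T₂‖ ≤ 1) (hV₃ : ∀ x : Hs, ‖V₃ x‖ = ‖x‖)
    (V₁ V₂ : K →L[ℂ] K)
    (hV₁ : ∀ x : K, ‖V₁ x‖ = ‖x‖) (hV₂ : ∀ x : K, ‖V₂ x‖ = ‖x‖)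
    (hVcomm : V₁ * V₂ = V₂ * V₁)
    (hdil : ∀ (m₁ m₂ : ℕ) (h : Hs),
      Hs.orthogonalProjectionOnto ((V₁ ^ m₁) ((V₂ ^ m₂) (h : K))) = (T₁ ^ m₁) ((T₂ ^ m₂) h))
    (W : K →L[ℂ] K)
    (hW : ∀ x : K, W x = (V₃ (Hs.orthogonalProjectionOnto x) : K) +
      (x - (Hs.orthogonalProjectionOnto x : K))) :
    (∀ x : K, ‖W x‖ = ‖x‖) ∧
    ∀ (m₁ m₂ m₃ : ℕ) (h : Hs),
      Hs.orthogonalProjectionOnto ((V₁ ^ m₁) ((V₂ ^ m₂) ((W ^ m₃) (h : K)))) =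
        (T₁ ^ m₁) ((T₂ ^ m₂) ((V₃ ^ m₃) h)) :=
  stmt_5_general Hs T₁ T₂ V₃ hV₃ V₁ V₂ hdil W hW
end

section
/- Let V_1, V_2, V_3 be pairwise commuting isometries on a complex Hilbert space H, and set S_1 = (V_1 + V_2 + V_3)/3 and S_2 = (V_1V_2 + V_2V_3 + V_3V_1)/3. Then the operator (2I − (2/3)S_1)^* (2I − (2/3)S_1) − (4/9)(S_2 − S_1)^* (S_2 − S_1) is a positive operator on H. -/
/-!
The averages `S₁` and `S₂` of isometries are contractions, so for every `x`,
`‖(2I − (2/3)S₁)x‖ ≥ 2‖x‖ − (2/3)‖x‖ = (4/3)‖x‖ ≥ (2/3)‖(S₂ − S₁)x‖`,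
and `‖Tx‖ ≤ ‖Ax‖` for all `x` says exactly that `A*A − T*T` is positive.
-/

open ContinuousLinearMap

lemma norm_inv_three_smul_add_add_le_one {E : Type*} [SeminormedAddCommGroup E]
    [NormedSpace ℂ E] {a b c : E} (ha : ‖a‖ ≤ 1) (hb : ‖b‖ ≤ 1) (hc : ‖c‖ ≤ 1) :
    ‖(3 : ℂ)⁻¹ • (a + b + c)‖ ≤ 1 := by
  rw [norm_smul, norm_inv, Complex.norm_ofNat]
  calc 3⁻¹ * ‖a + b + c‖ ≤ 3⁻¹ * (‖a‖ + ‖b‖ + ‖c‖) := by gcongr; exact norm_add₃_le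
    _ ≤ 1 := by linarith

namespace ContinuousLinearMap

variable {H : Type*} [NormedAddCommGroup H] [InnerProductSpace ℂ H] [CompleteSpace H]

lemma norm_le_one_of_adjoint_mul_self_eq_one {V : H →L[ℂ] H} (hV : adjoint V * V = 1) :
    ‖V‖ ≤ 1 :=
  opNorm_le_bound V zero_le_one fun x ↦ by
    rw [(norm_map_iff_adjoint_comp_self V).2 hV, one_mul]

lemma isPositive_adjoint_mul_self_sub_of_norm_le {A T : H →L[ℂ] H}
    (h : ∀ x, ‖T x‖ ≤ ‖A x‖) : (adjoint A * A - adjoint T * T).IsPositive := by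
  refine isPositive_def'.2 ⟨?_, fun x ↦ ?_⟩
  · simp only [← star_eq_adjoint]
    exact (IsSelfAdjoint.star_mul_self A).sub (IsSelfAdjoint.star_mul_self T)
  · rw [reApplyInnerSelf, sub_apply, inner_sub_left, map_sub, mul_apply_eq_comp,
      mul_apply_eq_comp, adjoint_inner_left, adjoint_inner_left, inner_self_eq_norm_sq,
      inner_self_eq_norm_sq, sub_nonneg]
    exact pow_le_pow_left₀ (norm_nonneg _) (h x) 2

lemma isPositive_of_norm_le_one {S₁ S₂ : H →L[ℂ] H} (hS₁ : ‖S₁‖ ≤ 1) (hS₂ : ‖S₂‖ ≤ 1) :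
    (adjoint ((2 : ℂ) • (1 : H →L[ℂ] H) - ((2 : ℂ)/3) • S₁) *
        ((2 : ℂ) • (1 : H →L[ℂ] H) - ((2 : ℂ)/3) • S₁) -
      ((4 : ℂ)/9) • (adjoint (S₂ - S₁) * (S₂ - S₁))).IsPositive := by
  have hsq : ((4 : ℂ)/9) • (adjoint (S₂ - S₁) * (S₂ - S₁)) =
      adjoint (((2 : ℂ)/3) • (S₂ - S₁)) * (((2 : ℂ)/3) • (S₂ - S₁)) := by
    rw [map_smulₛₗ, smul_mul_smul_comm, map_div₀, map_ofNat, map_ofNat]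
    norm_num
  rw [hsq]
  refine isPositive_adjoint_mul_self_sub_of_norm_le fun x ↦ ?_
  have h₁ := S₁.le_of_opNorm_le hS₁ x
  have h₂ := S₂.le_of_opNorm_le hS₂ x
  have hc : ‖(2 : ℂ) / 3‖ = 2 / 3 := by norm_num
  calc ‖(((2 : ℂ)/3) • (S₂ - S₁)) x‖ ≤ 2 / 3 * (‖S₂ x‖ + ‖S₁ x‖) := by
        rw [smul_apply, norm_smul, hc, sub_apply]
        gcongr
        exact norm_sub_le _ _
    _ ≤ ‖(2 : ℂ) • x‖ - ‖((2 : ℂ)/3) • S₁ x‖ := by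
        rw [norm_smul, norm_smul, hc, Complex.norm_ofNat]
        linarith
    _ ≤ ‖((2 : ℂ) • (1 : H →L[ℂ] H) - ((2 : ℂ)/3) • S₁) x‖ := norm_sub_norm_le _ _

end ContinuousLinearMap

theorem stmt_7_general {H : Type*} [NormedAddCommGroup H] [InnerProductSpace ℂ H] [CompleteSpace H]
    (V₁ V₂ V₃ : H →L[ℂ] H)
    (hV₁ : adjoint V₁ * V₁ = 1) (hV₂ : adjoint V₂ * V₂ = 1) (hV₃ : adjoint V₃ * V₃ = 1)
    (S₁ S₂ : H →L[ℂ] H)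
    (hS₁ : S₁ = (3 : ℂ)⁻¹ • (V₁ + V₂ + V₃))
    (hS₂ : S₂ = (3 : ℂ)⁻¹ • (V₁ * V₂ + V₂ * V₃ + V₃ * V₁)) :
    (adjoint ((2 : ℂ) • (1 : H →L[ℂ] H) - ((2 : ℂ)/3) • S₁) *
        ((2 : ℂ) • (1 : H →L[ℂ] H) - ((2 : ℂ)/3) • S₁) -
      ((4 : ℂ)/9) • (adjoint (S₂ - S₁) * (S₂ - S₁))).IsPositive := by
  have h₁ := norm_le_one_of_adjoint_mul_self_eq_one hV₁
  have h₂ := norm_le_one_of_adjoint_mul_self_eq_one hV₂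
  have h₃ := norm_le_one_of_adjoint_mul_self_eq_one hV₃
  have hmul {A B : H →L[ℂ] H} (hA : ‖A‖ ≤ 1) (hB : ‖B‖ ≤ 1) : ‖A * B‖ ≤ 1 :=
    (norm_mul_le A B).trans (mul_le_one₀ hA (norm_nonneg B) hB)
  subst hS₁ hS₂
  exact isPositive_of_norm_le_one (norm_inv_three_smul_add_add_le_one h₁ h₂ h₃)
    (norm_inv_three_smul_add_add_le_one (hmul h₁ h₂) (hmul h₂ h₃) (hmul h₃ h₁))

/-- If `V₁, V₂, V₃` are pairwise commuting isometries on a complex Hilbert space,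
`S₁ = (V₁+V₂+V₃)/3` and `S₂ = (V₁V₂+V₂V₃+V₃V₁)/3`, then the operator
`(2I − (2/3)S₁)* (2I − (2/3)S₁) − (4/9)(S₂ − S₁)* (S₂ − S₁)` is positive. -/
theorem stmt_7 {H : Type*} [NormedAddCommGroup H] [InnerProductSpace ℂ H] [CompleteSpace H]
    (V₁ V₂ V₃ : H →L[ℂ] H)
    (h12 : V₁ * V₂ = V₂ * V₁) (h13 : V₁ * V₃ = V₃ * V₁) (h23 : V₂ * V₃ = V₃ * V₂)
    (hV₁ : adjoint V₁ * V₁ = 1) (hV₂ : adjoint V₂ * V₂ = 1) (hV₃ : adjoint V₃ * V₃ = 1)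
    (S₁ S₂ : H →L[ℂ] H)
    (hS₁ : S₁ = (3 : ℂ)⁻¹ • (V₁ + V₂ + V₃))
    (hS₂ : S₂ = (3 : ℂ)⁻¹ • (V₁ * V₂ + V₂ * V₃ + V₃ * V₁)) :
    (adjoint ((2 : ℂ) • (1 : H →L[ℂ] H) - ((2 : ℂ)/3) • S₁) *
        ((2 : ℂ) • (1 : H →L[ℂ] H) - ((2 : ℂ)/3) • S₁) -
      ((4 : ℂ)/9) • (adjoint (S₂ - S₁) * (S₂ - S₁))).IsPositive :=
  stmt_7_general V₁ V₂ V₃ hV₁ hV₂ hV₃ S₁ S₂ hS₁ hS₂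
end

section
/- Let H be a complex Hilbert space, let T be a partial isometry on H (T T^* T = T) and P := I − T^*T the orthogonal projection onto ker T. Let T_1, T_2 be contractions on H and let E_1, E_2 be bounded operators on H with E_i = P E_i P and T_1 − T_2^* T = P E_1 P, T_2 − T_1^* T = P E_2 P. Then E_1^*E_1 − E_1E_1^* = E_2^*E_2 − E_2E_2^* if and only if P T_1^* T_1 P − T_1 P T_1^* P = P T_2^* T_2 P − T_2 P T_2^* P. -/
open ContinuousLinearMap

theorem aux_stmt10 {H : Type*} [NormedAddCommGroup H] [InnerProductSpace ℂ H] [CompleteSpace H]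
    (T P Ti Tj Ei : H →L[ℂ] H)
    (hTP : T * P = 0) (hPsa : star P = P) (hPP : P * P = P)
    (hEiP : Ei = P * Ei * P) (hTi : Ti = star Tj * T + Ei) :
    P * star Ti * Ti * P - Ti * P * star Ti * P = star Ei * Ei - Ei * star Ei := by
  have hEiP' : Ei * P = Ei := by
    conv_lhs => rw [hEiP]
    rw [mul_assoc, hPP, ← hEiP]
  have hPEi : P * Ei = Ei := by
    conv_lhs => rw [hEiP]
    rw [← mul_assoc, ← mul_assoc, hPP, ← hEiP]
  have hTiP : Ti * P = Ei := by
    rw [hTi, add_mul, mul_assoc, hTP, mul_zero, zero_add, hEiP']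
  have hPTi : P * star Ti = star Ei := by
    have := congrArg star hTiP
    rwa [star_mul, hPsa] at this
  have hsEiP : star Ei * P = star Ei := by
    have := congrArg star hPEi
    rwa [star_mul, hPsa] at this
  have hPsEi : P * star Ei = star Ei := by
    have := congrArg star hEiP'
    rwa [star_mul, hPsa] at this
  have hTEi : T * star Ei = 0 := by
    rw [← hPsEi, ← mul_assoc, hTP, zero_mul]
  have h1 : P * star Ti * Ti * P = star Ei * Ei := by
    rw [hPTi, mul_assoc, hTiP]
  have h2 : Ti * P * star Ti * P = Ei * star Ei := by
    rw [mul_assoc Ti P (star Ti), hPTi, mul_assoc, hsEiP, hTi, add_mul, mul_assoc,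
      hTEi, mul_zero, zero_add]
  rw [h1, h2]

/-- Let `T` be a partial isometry, `P = I − T*T`, `T₁, T₂` contractions and `E₁, E₂`
fundamental operators supported on `ker T`. Then `E₁*E₁ − E₁E₁* = E₂*E₂ − E₂E₂*` iff
`P T₁* T₁ P − T₁ P T₁* P = P T₂* T₂ P − T₂ P T₂* P`. -/
theorem stmt_10 {H : Type*} [NormedAddCommGroup H] [InnerProductSpace ℂ H] [CompleteSpace H]
    (T : H →L[ℂ] H) (hT : T * adjoint T * T = T)
    (P : H →L[ℂ] H) (hP : P = 1 - adjoint T * T)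
    (T₁ T₂ : H →L[ℂ] H) (hT₁ : ‖T₁‖ ≤ 1) (hT₂ : ‖T₂‖ ≤ 1)
    (E₁ E₂ : H →L[ℂ] H)
    (hE₁P : E₁ = P * E₁ * P) (hE₂P : E₂ = P * E₂ * P)
    (hE₁ : T₁ - adjoint T₂ * T = P * E₁ * P)
    (hE₂ : T₂ - adjoint T₁ * T = P * E₂ * P) :
    adjoint E₁ * E₁ - E₁ * adjoint E₁ = adjoint E₂ * E₂ - E₂ * adjoint E₂ ↔
      P * adjoint T₁ * T₁ * P - T₁ * P * adjoint T₁ * P =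
        P * adjoint T₂ * T₂ * P - T₂ * P * adjoint T₂ * P := by
  simp only [← star_eq_adjoint] at hT hP hE₁ hE₂ ⊢
  have hTP : T * P = 0 := by
    rw [hP, mul_sub, mul_one, ← mul_assoc, hT, sub_self]
  have hPsa : star P = P := by
    rw [hP, star_sub, star_one, star_mul, star_star]
  have hA : (star T * T) * (star T * T) = star T * T := by
    rw [mul_assoc, ← mul_assoc T (star T) T, hT]
  have hPP : P * P = P := by
    rw [hP, sub_mul, one_mul, mul_sub, mul_one, hA, sub_self, sub_zero]
  have h1 := aux_stmt10 T P T₁ T₂ E₁ hTP hPsa hPP hE₁P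
    (by rw [← (sub_eq_iff_eq_add').mp (hE₁.trans hE₁P.symm)])
  have h2 := aux_stmt10 T P T₂ T₁ E₂ hTP hPsa hPP hE₂P
    (by rw [← (sub_eq_iff_eq_add').mp (hE₂.trans hE₂P.symm)])
  rw [h1, h2]
end

section
/- Let H be a complex Hilbert space, let T be a partial isometry on H (T T^* T = T) and P := I − T^*T the orthogonal projection onto ker T. Let T_1, T_2 be contractions on H and let E_1, E_2 be bounded operators on H with E_i = P E_i P and T_1 − T_2^* T = P E_1 P, T_2 − T_1^* T = P E_2 P. Then E_1 E_2 = E_2 E_1 if and only if T_1 T_2 P = T_2 T_1 P (i.e. the restrictions of T_1 and T_2 to the invariant subspace ker T commute). -/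
open ContinuousLinearMap

/-- Let `T` be a partial isometry, `P = I − T*T`, `T₁, T₂` contractions and `E₁, E₂`
fundamental operators supported on `ker T`. Then `E₁E₂ = E₂E₁` iff `T₁T₂P = T₂T₁P`
(the restrictions of `T₁, T₂` to `ker T` commute). -/
theorem stmt_11 {H : Type*} [NormedAddCommGroup H] [InnerProductSpace ℂ H] [CompleteSpace H]
    (T : H →L[ℂ] H) (hT : T * adjoint T * T = T)
    (P : H →L[ℂ] H) (hP : P = 1 - adjoint T * T)
    (T₁ T₂ : H →L[ℂ] H) (hT₁ : ‖T₁‖ ≤ 1) (hT₂ : ‖T₂‖ ≤ 1)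
    (E₁ E₂ : H →L[ℂ] H)
    (hE₁P : E₁ = P * E₁ * P) (hE₂P : E₂ = P * E₂ * P)
    (hE₁ : T₁ - adjoint T₂ * T = P * E₁ * P)
    (hE₂ : T₂ - adjoint T₁ * T = P * E₂ * P) :
    E₁ * E₂ = E₂ * E₁ ↔ T₁ * T₂ * P = T₂ * T₁ * P := by
  -- T*T is idempotent
  have key : (adjoint T * T) * (adjoint T * T) = adjoint T * T := by
    calc (adjoint T * T) * (adjoint T * T) = adjoint T * (T * adjoint T * T) := by noncomm_ring
    _ = adjoint T * T := by rw [hT]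
  have hidem : P * P = P := by
    rw [hP, sub_mul, mul_sub, mul_sub, one_mul, mul_one, key]
    abel
  have hTP : T * P = 0 := by
    rw [hP, mul_sub, mul_one, ← mul_assoc, hT, sub_self]
  -- E_i absorb P on both sides
  have hE₁P' : E₁ * P = E₁ := by
    conv_lhs => rw [hE₁P]
    rw [mul_assoc, hidem, ← hE₁P]
  have hE₂P' : E₂ * P = E₂ := by
    conv_lhs => rw [hE₂P]
    rw [mul_assoc, hidem, ← hE₂P]
  have hTE₁ : T * E₁ = 0 := by
    rw [hE₁P, ← mul_assoc, ← mul_assoc, hTP, zero_mul, zero_mul]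
  have hTE₂ : T * E₂ = 0 := by
    rw [hE₂P, ← mul_assoc, ← mul_assoc, hTP, zero_mul, zero_mul]
  -- expressions for T₁, T₂
  have h1 : T₁ = E₁ + adjoint T₂ * T := by rw [← hE₁P] at hE₁; linear_combination (norm := noncomm_ring) hE₁
  have h2 : T₂ = E₂ + adjoint T₁ * T := by rw [← hE₂P] at hE₂; linear_combination (norm := noncomm_ring) hE₂
  have hT₂P : T₂ * P = E₂ := by
    rw [h2, add_mul, hE₂P', mul_assoc, hTP, mul_zero, add_zero]
  have hT₁P : T₁ * P = E₁ := by
    rw [h1, add_mul, hE₁P', mul_assoc, hTP, mul_zero, add_zero]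
  have k1 : T₁ * T₂ * P = E₁ * E₂ := by
    rw [mul_assoc, hT₂P, h1, add_mul, mul_assoc, hTE₂, mul_zero, add_zero]
  have k2 : T₂ * T₁ * P = E₂ * E₁ := by
    rw [mul_assoc, hT₁P, h2, add_mul, mul_assoc, hTE₁, mul_zero, add_zero]
  rw [k1, k2]
end

section
/- Let S_1, S_2, S_3 be pairwise commuting bounded operators on a complex Hilbert space H with ‖S_1‖ ≤ 1 and ‖S_2‖ ≤ 1, and suppose S_3 is a partial isometry (S_3 S_3^* S_3 = S_3); let P := I − S_3^* S_3 be the orthogonal projection onto ker S_3. Suppose E_1, E_2 are bounded operators on H with E_i = P E_i P satisfying S_1 − S_2^* S_3 = P E_1 P and S_2 − S_1^* S_3 = P E_2 P. Then ker S_3 is jointly invariant under S_1 and S_2, and the fundamental operators commute: E_1 E_2 = E_2 E_1. -/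
open ContinuousLinearMap

/-- Let `S₁, S₂, S₃` be pairwise commuting operators with `S₁, S₂` contractions and `S₃` a
partial isometry, `P = I − S₃*S₃`, and let `E₁, E₂` be fundamental operators supported on
`ker S₃`. Then `ker S₃` is jointly invariant under `S₁, S₂` and `E₁ E₂ = E₂ E₁`. -/
theorem stmt_12 {H : Type*} [NormedAddCommGroup H] [InnerProductSpace ℂ H] [CompleteSpace H]
    (S₁ S₂ S₃ : H →L[ℂ] H)
    (h12 : S₁ * S₂ = S₂ * S₁) (h13 : S₁ * S₃ = S₃ * S₁) (h23 : S₂ * S₃ = S₃ * S₂)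
    (hS₁ : ‖S₁‖ ≤ 1) (hS₂ : ‖S₂‖ ≤ 1)
    (hS₃ : S₃ * adjoint S₃ * S₃ = S₃)
    (P : H →L[ℂ] H) (hP : P = 1 - adjoint S₃ * S₃)
    (E₁ E₂ : H →L[ℂ] H)
    (hE₁P : E₁ = P * E₁ * P) (hE₂P : E₂ = P * E₂ * P)
    (hE₁ : S₁ - adjoint S₂ * S₃ = P * E₁ * P)
    (hE₂ : S₂ - adjoint S₁ * S₃ = P * E₂ * P) :
    (∀ x : H, S₃ x = 0 → S₃ (S₁ x) = 0 ∧ S₃ (S₂ x) = 0) ∧ E₁ * E₂ = E₂ * E₁ := by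
  -- `S₃ P = 0`
  have hSP : S₃ * P = 0 := by
    rw [hP, mul_sub, mul_one, ← mul_assoc, hS₃, sub_self]
  -- `P` is idempotent
  have hP2 : P * P = P := by
    have hQ : (adjoint S₃ * S₃) * (adjoint S₃ * S₃) = adjoint S₃ * S₃ := by
      calc (adjoint S₃ * S₃) * (adjoint S₃ * S₃)
          = adjoint S₃ * (S₃ * adjoint S₃ * S₃) := by noncomm_ring
        _ = adjoint S₃ * S₃ := by rw [hS₃]
    rw [hP]
    calc (1 - adjoint S₃ * S₃) * (1 - adjoint S₃ * S₃)
        = 1 - adjoint S₃ * S₃ - adjoint S₃ * S₃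
            + (adjoint S₃ * S₃) * (adjoint S₃ * S₃) := by noncomm_ring
      _ = 1 - adjoint S₃ * S₃ := by rw [hQ]; abel
  -- identify `E₁, E₂` with the defect expressions
  have eA : E₁ = S₁ - adjoint S₂ * S₃ := hE₁P.trans hE₁.symm
  have eB : E₂ = S₂ - adjoint S₁ * S₃ := hE₂P.trans hE₂.symm
  -- `S₃ Eᵢ = 0`
  have hS3E₁ : S₃ * E₁ = 0 := by
    rw [hE₁P, ← mul_assoc, ← mul_assoc, hSP, zero_mul, zero_mul]
  have hS3E₂ : S₃ * E₂ = 0 := by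
    rw [hE₂P, ← mul_assoc, ← mul_assoc, hSP, zero_mul, zero_mul]
  -- `Eᵢ P = Eᵢ`
  have hE₁right : E₁ * P = E₁ := by
    conv_lhs => rw [hE₁P, mul_assoc, hP2]
    exact hE₁P.symm
  have hE₂right : E₂ * P = E₂ := by
    conv_lhs => rw [hE₂P, mul_assoc, hP2]
    exact hE₂P.symm
  constructor
  · intro x hx
    have hc1 : S₃ * S₁ = S₃ * adjoint S₂ * S₃ := by
      have hS1 : S₁ = E₁ + adjoint S₂ * S₃ := by rw [eA]; abel
      rw [hS1, mul_add, hS3E₁, zero_add, mul_assoc]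
    have hc2 : S₃ * S₂ = S₃ * adjoint S₁ * S₃ := by
      have hS2 : S₂ = E₂ + adjoint S₁ * S₃ := by rw [eB]; abel
      rw [hS2, mul_add, hS3E₂, zero_add, mul_assoc]
    constructor
    · have := congrArg (fun T : H →L[ℂ] H => T x) hc1
      simpa [ContinuousLinearMap.mul_apply, hx] using this
    · have := congrArg (fun T : H →L[ℂ] H => T x) hc2
      simpa [ContinuousLinearMap.mul_apply, hx] using this
  · -- commutation of the fundamental operators
    have h23' : S₃ * (S₂ * P) = 0 := by
      rw [← mul_assoc, ← h23, mul_assoc, hSP, mul_zero]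
    have h13' : S₃ * (S₁ * P) = 0 := by
      rw [← mul_assoc, ← h13, mul_assoc, hSP, mul_zero]
    have h12' : S₁ * (S₂ * P) = S₂ * (S₁ * P) := by
      rw [← mul_assoc, h12, mul_assoc]
    have key : (E₁ * E₂ - E₂ * E₁) * P = 0 := by
      rw [eA, eB]
      simp only [sub_mul, mul_sub, mul_assoc, hSP, h23', h13', h12', mul_zero, sub_zero,
        zero_sub, sub_self, neg_sub, sub_neg_eq_add]
    have hend : (E₁ * E₂ - E₂ * E₁) * P = E₁ * E₂ - E₂ * E₁ := by
      rw [sub_mul, mul_assoc, hE₂right, mul_assoc, hE₁right]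
    exact sub_eq_zero.mp (hend.symm.trans key)
end

section
/- Let W be an isometry on a complex Hilbert space H₀ with WW^* ≠ I, and, on H = H₀ ⊕ H₀ ⊕ H₀, define the block operators S_1 = (1/3)[[I+W, 0, I],[0, W, 0],[I, 0, I+W]], S_2 = (1/3)[[W, 0, I+W],[0,0,0],[I+W, 0, W]] and S_3 = [[0,0,W],[0,0,0],[W,0,0]]. Then: (i) S_1, S_2, S_3 pairwise commute; (ii) S_3 is a partial isometry and P := I − S_3^* S_3 = diag(0, I, 0); (iii) the operators E_1 := diag(0, W/3, 0) and E_2 := 0 satisfy S_1 − S_2^* S_3 = P E_1 P and S_2 − S_1^* S_3 = P E_2 P; and (iv) E_1^*E_1 − E_1E_1^* = (1/9)·diag(0, I − WW^*, 0) ≠ 0 while E_2^*E_2 − E_2E_2^* = 0, so that E_1^*E_1 − E_1E_1^* ≠ E_2^*E_2 − E_2E_2^*. -/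
/-!
Block matrices of operators on `H₀` act on `H₀ ⊕ H₀ ⊕ H₀` through `blk3`, which is injective and
turns matrix products, differences, scalar multiples and conjugate transposes into the
corresponding operations on operators. So every claim is a `3 × 3` matrix identity over the
operator algebra of `H₀`; these identities use only `W* W = I`. The commutator of
`E₁ = diag(0, W/3, 0)` is `(1/9) diag(0, W* W - W W*, 0) = (1/9) diag(0, I - W W*, 0)`, which is
nonzero precisely because `W` is not a co-isometry.
-/

open ContinuousLinearMap

/-- The `L²`-direct sum `PiLp 2` of complete spaces is complete (the uniformity agrees with the
product one). -/
instance piLp_two_completeSpace {ι : Type*} [Fintype ι] {H₀ : Type*} [NormedAddCommGroup H₀]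
    [CompleteSpace H₀] : CompleteSpace (PiLp 2 fun _ : ι => H₀) :=
  inferInstance

/-- The operator on the Hilbert-space direct sum `H₀ ⊕ H₀ ⊕ H₀` given by a `3 × 3` block matrix
of operators on `H₀`. -/
noncomputable def blk3 {H₀ : Type*} [NormedAddCommGroup H₀] [InnerProductSpace ℂ H₀]
    (M : Matrix (Fin 3) (Fin 3) (H₀ →L[ℂ] H₀)) :
    PiLp 2 (fun _ : Fin 3 => H₀) →L[ℂ] PiLp 2 (fun _ : Fin 3 => H₀) :=
  ((PiLp.continuousLinearEquiv 2 ℂ (fun _ : Fin 3 => H₀)).symm.toContinuousLinearMap.comp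
      (ContinuousLinearMap.pi fun i => ∑ j, (M i j).comp (ContinuousLinearMap.proj j))).comp
    (PiLp.continuousLinearEquiv 2 ℂ (fun _ : Fin 3 => H₀)).toContinuousLinearMap

namespace Matrix

variable {m n R : Type*}

theorem star_fin_three [Star R] (a b c d e f g h i : R) :
    star !![a, b, c; d, e, f; g, h, i] =
      !![star a, star d, star g; star b, star e, star h; star c, star f, star i] := by
  ext j k
  fin_cases j <;> fin_cases k <;> rfl

theorem single_one_one_fin_three [Zero R] (a : R) :
    single (1 : Fin 3) 1 a = !![0, 0, 0; 0, a, 0; 0, 0, 0] := by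
  ext j k
  fin_cases j <;> fin_cases k <;> rfl

variable [DecidableEq m] [DecidableEq n]

theorem single_eq_zero_iff [Zero R] {i : m} {j : n} {a : R} : single i j a = 0 ↔ a = 0 :=
  ⟨fun h => by simpa using congr($h i j), fun h => h ▸ single_zero i j⟩

theorem single_sub [AddGroup R] (i : m) (j : n) (a b : R) :
    single i j (a - b) = single i j a - single i j b := by
  ext i' j'
  by_cases h : i = i' ∧ j = j' <;> simp [h]

end Matrix

open Matrix

section ExampleBlocks

variable {R : Type*} [Ring R] (w : R)

/-- `blockS₁ w`, `blockS₂ w`, `blockS₃ w` are the block matrices of `3 S₁`, `3 S₂`, `S₃` for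
`W = w`. -/
def blockS₁ : Matrix (Fin 3) (Fin 3) R := !![1 + w, 0, 1; 0, w, 0; 1, 0, 1 + w]

def blockS₂ : Matrix (Fin 3) (Fin 3) R := !![w, 0, 1 + w; 0, 0, 0; 1 + w, 0, w]

def blockS₃ : Matrix (Fin 3) (Fin 3) R := !![0, 0, w; 0, 0, 0; w, 0, 0]

theorem commute_blockS₁_blockS₂ : Commute (blockS₁ w) (blockS₂ w) := by
  simp only [Commute, SemiconjBy, blockS₁, blockS₂, mul_fin_three]
  ext i j; fin_cases i <;> fin_cases j <;> simp <;> noncomm_ring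

theorem commute_blockS₁_blockS₃ : Commute (blockS₁ w) (blockS₃ w) := by
  simp only [Commute, SemiconjBy, blockS₁, blockS₃, mul_fin_three]
  ext i j; fin_cases i <;> fin_cases j <;> simp <;> noncomm_ring

theorem commute_blockS₂_blockS₃ : Commute (blockS₂ w) (blockS₃ w) := by
  simp only [Commute, SemiconjBy, blockS₂, blockS₃, mul_fin_three]
  ext i j; fin_cases i <;> fin_cases j <;> simp <;> noncomm_ring

variable [StarRing R] {w}

theorem blockS₃_mul_star_mul_self (hw : star w * w = 1) :
    blockS₃ w * star (blockS₃ w) * blockS₃ w = blockS₃ w := by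
  simp only [blockS₃, star_fin_three, star_zero, mul_fin_three]
  ext i j; fin_cases i <;> fin_cases j <;> simp [mul_assoc, hw]

theorem one_sub_star_blockS₃_mul_self (hw : star w * w = 1) :
    1 - star (blockS₃ w) * blockS₃ w = single 1 1 1 := by
  simp only [blockS₃, single_one_one_fin_three, star_fin_three, star_zero, mul_fin_three]
  ext i j; fin_cases i <;> fin_cases j <;> simp [hw]

theorem blockS₁_sub_star_blockS₂_mul_blockS₃ (hw : star w * w = 1) :
    blockS₁ w - star (blockS₂ w) * blockS₃ w = single 1 1 w := by
  simp only [blockS₁, blockS₂, blockS₃, single_one_one_fin_three, star_fin_three, star_zero,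
    star_one, star_add, mul_fin_three]
  ext i j; fin_cases i <;> fin_cases j <;> simp [add_mul, hw] <;> abel

theorem blockS₂_sub_star_blockS₁_mul_blockS₃ (hw : star w * w = 1) :
    blockS₂ w - star (blockS₁ w) * blockS₃ w = 0 := by
  simp only [blockS₁, blockS₂, blockS₃, star_fin_three, star_zero, star_one, star_add,
    mul_fin_three]
  ext i j; fin_cases i <;> fin_cases j <;> simp [add_mul, hw] <;> abel

end ExampleBlocks

section Blk3

variable {H₀ : Type*} [NormedAddCommGroup H₀] [InnerProductSpace ℂ H₀]

theorem blk3_apply (M : Matrix (Fin 3) (Fin 3) (H₀ →L[ℂ] H₀)) (x : PiLp 2 (fun _ : Fin 3 => H₀))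
    (i : Fin 3) : blk3 M x i = ∑ j, M i j (x j) := rfl

theorem blk3_apply_single (M : Matrix (Fin 3) (Fin 3) (H₀ →L[ℂ] H₀)) (i j : Fin 3) (v : H₀) :
    blk3 M (PiLp.single 2 j v) i = M i j v := by
  simp [blk3_apply, apply_ite]

theorem blk3_injective : Function.Injective (blk3 (H₀ := H₀)) := by
  intro M N h
  ext i j v
  simpa only [blk3_apply_single] using congr($h (PiLp.single 2 j v) i)

theorem blk3_mul (M N : Matrix (Fin 3) (Fin 3) (H₀ →L[ℂ] H₀)) :
    blk3 (M * N) = blk3 M * blk3 N := by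
  ext x i
  simp only [mul_apply_eq_comp, blk3_apply, Matrix.mul_apply, FunLike.coe_sum, Finset.sum_apply,
    map_sum]
  exact Finset.sum_comm

theorem blk3_smul (c : ℂ) (M : Matrix (Fin 3) (Fin 3) (H₀ →L[ℂ] H₀)) :
    blk3 (c • M) = c • blk3 M := by
  ext x i
  simp [blk3_apply, Finset.smul_sum]

theorem blk3_one : blk3 (1 : Matrix (Fin 3) (Fin 3) (H₀ →L[ℂ] H₀)) = 1 := by
  ext x i
  simp [blk3_apply, Matrix.one_apply, apply_ite (DFunLike.coe : (H₀ →L[ℂ] H₀) → H₀ → H₀),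
    ite_apply]

theorem blk3_zero : blk3 (0 : Matrix (Fin 3) (Fin 3) (H₀ →L[ℂ] H₀)) = 0 := by
  ext x i
  simp [blk3_apply]

theorem blk3_sub (M N : Matrix (Fin 3) (Fin 3) (H₀ →L[ℂ] H₀)) :
    blk3 (M - N) = blk3 M - blk3 N := by
  ext x i
  simp [blk3_apply, Finset.sum_sub_distrib]

theorem adjoint_blk3 [CompleteSpace H₀] (M : Matrix (Fin 3) (Fin 3) (H₀ →L[ℂ] H₀)) :
    adjoint (blk3 M) = blk3 (star M) := by
  refine ((eq_adjoint_iff _ _).2 fun x y => ?_).symm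
  simp only [PiLp.inner_apply, blk3_apply, inner_sum, sum_inner, Matrix.star_apply,
    star_eq_adjoint, adjoint_inner_left]
  exact Finset.sum_comm

theorem blk3_single_eq_zero_iff {i j : Fin 3} {T : H₀ →L[ℂ] H₀} :
    blk3 (single i j T) = 0 ↔ T = 0 := by
  rw [← blk3_zero, blk3_injective.eq_iff, single_eq_zero_iff]

theorem adjoint_blk3_single_mul_self_sub [CompleteSpace H₀] (i : Fin 3) (T : H₀ →L[ℂ] H₀) :
    adjoint (blk3 (single i i T)) * blk3 (single i i T) -
        blk3 (single i i T) * adjoint (blk3 (single i i T)) =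
      blk3 (single i i (adjoint T * T - T * adjoint T)) := by
  rw [adjoint_blk3, ← blk3_mul, ← blk3_mul, ← blk3_sub, star_eq_conjTranspose,
    conjTranspose_single, single_mul_single_same, single_mul_single_same, ← single_sub,
    star_eq_adjoint]

end Blk3

/-- Example 2 of the paper: for an isometry `W` on `H₀` with `WW* ≠ I`, the block operators
`S₁ = (1/3)[[I+W,0,I],[0,W,0],[I,0,I+W]]`, `S₂ = (1/3)[[W,0,I+W],[0,0,0],[I+W,0,W]]`,
`S₃ = [[0,0,W],[0,0,0],[W,0,0]]` on `H₀ ⊕ H₀ ⊕ H₀` pairwise commute; `S₃` is a partial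
isometry with `P = I − S₃*S₃ = diag(0,I,0)`; the operators `E₁ = diag(0,W/3,0)`, `E₂ = 0`
satisfy the fundamental equations; and `E₁*E₁ − E₁E₁* = (1/9)·diag(0,I−WW*,0) ≠ 0` while
`E₂*E₂ − E₂E₂* = 0`, so `E₁*E₁ − E₁E₁* ≠ E₂*E₂ − E₂E₂*`. -/
theorem stmt_14 {H₀ : Type*} [NormedAddCommGroup H₀] [InnerProductSpace ℂ H₀]
    [CompleteSpace H₀]
    (W : H₀ →L[ℂ] H₀) (hW : adjoint W * W = 1) (hWco : W * adjoint W ≠ 1)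
    (S₁ S₂ S₃ P E₁ E₂ : PiLp 2 (fun _ : Fin 3 => H₀) →L[ℂ] PiLp 2 (fun _ : Fin 3 => H₀))
    (hS₁ : S₁ = (3 : ℂ)⁻¹ • blk3 !![1 + W, 0, 1; 0, W, 0; 1, 0, 1 + W])
    (hS₂ : S₂ = (3 : ℂ)⁻¹ • blk3 !![W, 0, 1 + W; 0, 0, 0; 1 + W, 0, W])
    (hS₃ : S₃ = blk3 !![0, 0, W; 0, 0, 0; W, 0, 0])
    (hP : P = 1 - adjoint S₃ * S₃)
    (hE₁ : E₁ = (3 : ℂ)⁻¹ • blk3 !![0, 0, 0; 0, W, 0; 0, 0, 0])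
    (hE₂ : E₂ = 0) :
    -- (i) the operators pairwise commute
    (S₁ * S₂ = S₂ * S₁ ∧ S₁ * S₃ = S₃ * S₁ ∧ S₂ * S₃ = S₃ * S₂) ∧
    -- (ii) `S₃` is a partial isometry and `P = diag(0, I, 0)`
    (S₃ * adjoint S₃ * S₃ = S₃ ∧ P = blk3 !![0, 0, 0; 0, 1, 0; 0, 0, 0]) ∧
    -- (iii) the fundamental equations hold
    (S₁ - adjoint S₂ * S₃ = P * E₁ * P ∧ S₂ - adjoint S₁ * S₃ = P * E₂ * P) ∧
    -- (iv) the commutator of `E₁` is nonzero while that of `E₂` vanishes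
    (adjoint E₁ * E₁ - E₁ * adjoint E₁ =
        (9 : ℂ)⁻¹ • blk3 !![0, 0, 0; 0, 1 - W * adjoint W, 0; 0, 0, 0] ∧
      adjoint E₁ * E₁ - E₁ * adjoint E₁ ≠ 0 ∧
      adjoint E₂ * E₂ - E₂ * adjoint E₂ = 0 ∧
      adjoint E₁ * E₁ - E₁ * adjoint E₁ ≠ adjoint E₂ * E₂ - E₂ * adjoint E₂) := by
  replace hS₁ : S₁ = blk3 ((3 : ℂ)⁻¹ • blockS₁ W) := by rw [hS₁, blk3_smul]; rfl
  replace hS₂ : S₂ = blk3 ((3 : ℂ)⁻¹ • blockS₂ W) := by rw [hS₂, blk3_smul]; rfl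
  replace hS₃ : S₃ = blk3 (blockS₃ W) := hS₃
  replace hE₁ : E₁ = blk3 (single 1 1 ((3 : ℂ)⁻¹ • W)) := by
    rw [hE₁, ← single_one_one_fin_three, ← smul_single, blk3_smul]
  replace hW : star W * W = 1 := hW
  subst hS₁ hS₂ hS₃ hE₂
  simp only [← single_one_one_fin_three]
  have h3 : star (3 : ℂ)⁻¹ = 3⁻¹ := by simp
  have hP₁ : P = blk3 (single 1 1 1) := by
    rw [hP, adjoint_blk3, ← blk3_mul, ← blk3_one, ← blk3_sub, one_sub_star_blockS₃_mul_self hW]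
  have hcomm : adjoint E₁ * E₁ - E₁ * adjoint E₁ =
      (9 : ℂ)⁻¹ • blk3 (single 1 1 (1 - W * adjoint W)) := by
    rw [hE₁, adjoint_blk3_single_mul_self_sub, ← blk3_smul, smul_single, ← star_eq_adjoint,
      star_smul, h3, smul_mul_smul_comm, smul_mul_smul_comm, hW, ← smul_sub, star_eq_adjoint]
    norm_num
  have hne : adjoint E₁ * E₁ - E₁ * adjoint E₁ ≠ 0 :=
    hcomm ▸ smul_ne_zero (by norm_num) (blk3_single_eq_zero_iff.not.2 (sub_ne_zero.2 hWco.symm))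
  refine ⟨⟨?_, ?_, ?_⟩, ⟨?_, hP₁⟩, ⟨?_, ?_⟩, hcomm, hne, by simp,
    by simpa only [map_zero, mul_zero, sub_zero] using hne⟩
  · rw [← blk3_mul, ← blk3_mul, smul_mul_smul_comm, smul_mul_smul_comm,
      (commute_blockS₁_blockS₂ W).eq]
  · rw [← blk3_mul, ← blk3_mul, Matrix.smul_mul, Matrix.mul_smul, (commute_blockS₁_blockS₃ W).eq]
  · rw [← blk3_mul, ← blk3_mul, Matrix.smul_mul, Matrix.mul_smul, (commute_blockS₂_blockS₃ W).eq]
  · rw [adjoint_blk3, ← blk3_mul, ← blk3_mul, blockS₃_mul_star_mul_self hW]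
  · rw [hP₁, hE₁, adjoint_blk3, ← blk3_mul, ← blk3_mul, ← blk3_mul, ← blk3_sub, star_smul, h3,
      Matrix.smul_mul, ← smul_sub, blockS₁_sub_star_blockS₂_mul_blockS₃ hW, single_mul_single_same,
      single_mul_single_same, one_mul, mul_one, smul_single]
  · rw [adjoint_blk3, ← blk3_mul, ← blk3_sub, star_smul, h3, Matrix.smul_mul, ← smul_sub,
      blockS₂_sub_star_blockS₁_mul_blockS₃ hW, smul_zero, blk3_zero, mul_zero, zero_mul]
end
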